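/- If v is a multiplier system of weight r on a subgroup Γ ⊂ Sp(g,ℤ) and L ∈ Sp(g,ℤ) normalizes Γ (or more generally, restricting to LΓL⁻¹ ∩ Γ), then ṽ(M) := v(LML⁻¹)·σ(LML⁻¹,L)/σ(L,M) is again a multiplier system of weight r. -/

import Mathlib

/-!
For `M, N ∈ Sp(g,ℝ)` the defect `L(MN,Z) - L(M,N⟨Z⟩) - L(N,Z)` lies in `2πℤ`, because
`J(MN,Z) = J(M,N⟨Z⟩) J(N,Z)`. It is continuous on the convex Siegel half space, hence constant;
comparing the defect of `(M₁, M₂)` at `iE` and at `M₃⟨iE⟩` gives the cocycle identity for `w`.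
The multiplier relation for `ṽ` is the exponential of a linear combination of three instances of
that identity.

That `Sp(g,ℝ)` acts on the Siegel half space comes from
`(CZ+D)ᴴ(AZ+B) - (AZ+B)ᴴ(CZ+D) = Z - Zᴴ`, i.e. `Im M⟨Z⟩ = (CZ+D)⁻ᴴ (Im Z) (CZ+D)⁻¹`.
-/

open Matrix Complex

noncomputable section

/-- The space of `2g × 2g` real matrices (symplectic candidates). -/
abbrev SpMat (g : ℕ) := Matrix (Fin g ⊕ Fin g) (Fin g ⊕ Fin g) ℝ

/-- The Siegel upper half plane of genus `g`: symmetric complex matrices with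
positive definite imaginary part. -/
def SiegelUHP (g : ℕ) : Set (Matrix (Fin g) (Fin g) ℂ) :=
  {Z | Z.IsSymm ∧ Matrix.PosDef (Matrix.of fun i j => (Z i j).im)}

/-- Coercion of a real matrix to a complex matrix. -/
def cmat {g : ℕ} (A : Matrix (Fin g) (Fin g) ℝ) : Matrix (Fin g) (Fin g) ℂ :=
  A.map (fun x => (x : ℂ))

/-- The automorphy factor `J(M,Z) = det (C Z + D)`. -/
def Jfac {g : ℕ} (M : SpMat g) (Z : Matrix (Fin g) (Fin g) ℂ) : ℂ :=
  (cmat M.toBlocks₂₁ * Z + cmat M.toBlocks₂₂).det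

/-- The action `M⟨Z⟩ = (A Z + B)(C Z + D)⁻¹` on the Siegel upper half plane. -/
def spAct {g : ℕ} (M : SpMat g) (Z : Matrix (Fin g) (Fin g) ℂ) :
    Matrix (Fin g) (Fin g) ℂ :=
  (cmat M.toBlocks₁₁ * Z + cmat M.toBlocks₁₂) *
    (cmat M.toBlocks₂₁ * Z + cmat M.toBlocks₂₂)⁻¹

/-- The base point `i·E` of the Siegel upper half plane. -/
def iE (g : ℕ) : Matrix (Fin g) (Fin g) ℂ := Complex.I • 1

/-- `L` is a continuous branch of `arg J(M, ·)` on the Siegel upper half plane,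
normalized to the principal value at `Z = iE`. -/
def IsArgBranch (g : ℕ) (L : SpMat g → Matrix (Fin g) (Fin g) ℂ → ℝ) : Prop :=
  (∀ M ∈ Matrix.symplecticGroup (Fin g) ℝ, ContinuousOn (L M) (SiegelUHP g)) ∧
  (∀ M ∈ Matrix.symplecticGroup (Fin g) ℝ, ∀ Z ∈ SiegelUHP g,
      (‖Jfac M Z‖ : ℂ) * Complex.exp (Complex.I * (L M Z)) = Jfac M Z) ∧
  (∀ M ∈ Matrix.symplecticGroup (Fin g) ℝ, L M (iE g) = Complex.arg (Jfac M (iE g)))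

/-- The cocycle `w(M,N) = (1/2π)(L(MN,Z) - L(M,NZ) - L(N,Z))`, evaluated at the
base point `Z = iE` (it is independent of `Z`). -/
def wcoc {g : ℕ} (L : SpMat g → Matrix (Fin g) (Fin g) ℂ → ℝ) (M N : SpMat g) : ℝ :=
  (L (M * N) (iE g) - L M (spAct N (iE g)) - L N (iE g)) / (2 * Real.pi)

/-- A multiplier system of weight `r` on `Γ`: values of absolute value `1`
satisfying `v(MN) = v(M)v(N)·e^{2πi r w(M,N)}`. -/
def IsMultiplier (g : ℕ) (L : SpMat g → Matrix (Fin g) (Fin g) ℂ → ℝ)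
    (Γ : Set (SpMat g)) (r : ℝ) (v : SpMat g → ℂ) : Prop :=
  (∀ M ∈ Γ, ‖v M‖ = 1) ∧
  (∀ M ∈ Γ, ∀ N ∈ Γ, v (M * N) =
      v M * v N * Complex.exp (2 * Real.pi * Complex.I * r * wcoc L M N))

open scoped ComplexOrder

namespace Matrix

variable {n : Type*} [Fintype n]

theorem PosDef.of_map_ofReal {P : Matrix n n ℝ} (hP : (P.map ((↑) : ℝ → ℂ)).PosDef) :
    P.PosDef := by
  refine PosDef.of_dotProduct_mulVec_pos ?_ fun x hx => ?_
  · ext i j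
    simpa using congrFun₂ hP.isHermitian i j
  · have hxc : ofRealHom ∘ x ≠ 0 := fun h => hx <| funext fun i => by
      simpa using congrFun h i
    have := hP.dotProduct_mulVec_pos hxc
    have hcast : star (ofRealHom ∘ x) ⬝ᵥ P.map ((↑) : ℝ → ℂ) *ᵥ (ofRealHom ∘ x)
        = ((x ⬝ᵥ P *ᵥ x : ℝ) : ℂ) := by
      simp [dotProduct, mulVec]
    rw [hcast] at this
    simpa using this

theorem PosDef.map_ofReal {P : Matrix n n ℝ} (hP : P.PosDef) :
    (P.map ((↑) : ℝ → ℂ)).PosDef := by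
  have hH : (P.map ((↑) : ℝ → ℂ)).IsHermitian := hP.isHermitian.map _ fun _ => by simp
  refine PosDef.of_dotProduct_mulVec_pos hH fun v hv => ?_
  set x : n → ℝ := fun i => (v i).re
  set y : n → ℝ := fun i => (v i).im
  have hre : (star v ⬝ᵥ P.map ((↑) : ℝ → ℂ) *ᵥ v).re = x ⬝ᵥ P *ᵥ x + y ⬝ᵥ P *ᵥ y := by
    simp only [dotProduct, mulVec, map_apply, Complex.re_sum, ← Finset.sum_add_distrib,
      Finset.mul_sum]
    refine Finset.sum_congr rfl fun i _ => Finset.sum_congr rfl fun j _ => ?_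
    simp [x, y]
  have hxy : x ≠ 0 ∨ y ≠ 0 := by
    by_contra! h
    exact hv (funext fun i => Complex.ext (congrFun h.1 i) (congrFun h.2 i))
  refine Complex.lt_def.2 ⟨?_, (hH.im_star_dotProduct_mulVec_self v).symm⟩
  rw [hre]
  rcases hxy with h | h
  · simpa using add_pos_of_pos_of_nonneg (hP.dotProduct_mulVec_pos h)
      (hP.posSemidef.dotProduct_mulVec_nonneg y)
  · simpa using add_pos_of_nonneg_of_pos (hP.posSemidef.dotProduct_mulVec_nonneg x)
      (hP.dotProduct_mulVec_pos h)

theorem posDef_map_ofReal_iff {P : Matrix n n ℝ} :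
    (P.map ((↑) : ℝ → ℂ)).PosDef ↔ P.PosDef :=
  ⟨PosDef.of_map_ofReal, PosDef.map_ofReal⟩

end Matrix

section SiegelUHP

variable {g : ℕ}

theorem Matrix.IsSymm.sub_conjTranspose {Z : Matrix (Fin g) (Fin g) ℂ} (hZ : Z.IsSymm) :
    Z - Zᴴ = (2 * I) • (Matrix.of fun i j => (Z i j).im).map ((↑) : ℝ → ℂ) := by
  ext i j
  rw [Matrix.sub_apply, conjTranspose_apply, ← transpose_apply Z i j, hZ, RCLike.star_def, sub_conj]
  simp only [Matrix.smul_apply, map_apply, of_apply, smul_eq_mul]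
  push_cast; ring

theorem mem_siegelUHP_iff {Z : Matrix (Fin g) (Fin g) ℂ} :
    Z ∈ SiegelUHP g ↔ Z.IsSymm ∧ ((2 * I)⁻¹ • (Z - Zᴴ)).PosDef := by
  refine and_congr_right fun hZ => ?_
  rw [hZ.sub_conjTranspose, inv_smul_smul₀ (by simp), posDef_map_ofReal_iff]

end SiegelUHP

section SymplecticAction

variable {g : ℕ}

def spNum (M : SpMat g) (Z : Matrix (Fin g) (Fin g) ℂ) : Matrix (Fin g) (Fin g) ℂ :=
  cmat M.toBlocks₁₁ * Z + cmat M.toBlocks₁₂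

def spDen (M : SpMat g) (Z : Matrix (Fin g) (Fin g) ℂ) : Matrix (Fin g) (Fin g) ℂ :=
  cmat M.toBlocks₂₁ * Z + cmat M.toBlocks₂₂

theorem Jfac_eq_det_spDen (M : SpMat g) (Z : Matrix (Fin g) (Fin g) ℂ) :
    Jfac M Z = (spDen M Z).det := rfl

theorem spAct_eq_spNum_mul_inv (M : SpMat g) (Z : Matrix (Fin g) (Fin g) ℂ) :
    spAct M Z = spNum M Z * (spDen M Z)⁻¹ := rfl

theorem cmat_conjTranspose (A : Matrix (Fin g) (Fin g) ℝ) : (cmat A)ᴴ = (cmat A)ᵀ := by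
  ext i j; simp [cmat]

theorem cmat_toBlocks_of_mem_symplecticGroup {M : SpMat g} (hM : M ∈ symplecticGroup (Fin g) ℝ) :
    (cmat M.toBlocks₁₁)ᵀ * cmat M.toBlocks₂₁ = (cmat M.toBlocks₂₁)ᵀ * cmat M.toBlocks₁₁ ∧
    (cmat M.toBlocks₁₂)ᵀ * cmat M.toBlocks₂₂ = (cmat M.toBlocks₂₂)ᵀ * cmat M.toBlocks₁₂ ∧
    (cmat M.toBlocks₁₁)ᵀ * cmat M.toBlocks₂₂ - (cmat M.toBlocks₂₁)ᵀ * cmat M.toBlocks₁₂ = 1 := by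
  have hMc := SymplecticGroup.map_mem hM ofRealHom
  rwa [← fromBlocks_toBlocks M, fromBlocks_map, SymplecticGroup.fromBlocks_mem_iff] at hMc

theorem spDen_mul_spNum_sub {M : SpMat g} (hM : M ∈ symplecticGroup (Fin g) ℝ)
    (X W : Matrix (Fin g) (Fin g) ℂ) :
    (X * (cmat M.toBlocks₂₁)ᵀ + (cmat M.toBlocks₂₂)ᵀ) * spNum M W -
      (X * (cmat M.toBlocks₁₁)ᵀ + (cmat M.toBlocks₁₂)ᵀ) * spDen M W = W - X := by
  obtain ⟨hAC, hBD, hAD⟩ := cmat_toBlocks_of_mem_symplecticGroup hM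
  set A := cmat M.toBlocks₁₁
  set B := cmat M.toBlocks₁₂
  set C := cmat M.toBlocks₂₁
  set D := cmat M.toBlocks₂₂
  have hDA : Dᵀ * A - Bᵀ * C = 1 := by
    simpa using congr(transpose $hAD)
  calc (X * Cᵀ + Dᵀ) * (A * W + B) - (X * Aᵀ + Bᵀ) * (C * W + D)
      = X * (Cᵀ * A - Aᵀ * C) * W - X * (Aᵀ * D - Cᵀ * B) + (Dᵀ * A - Bᵀ * C) * W
          + (Dᵀ * B - Bᵀ * D) := by noncomm_ring
    _ = W - X := by rw [hAC, hBD, hAD, hDA]; noncomm_ring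

end SymplecticAction

section SiegelAction

variable {g : ℕ} {M : SpMat g} (hM : M ∈ symplecticGroup (Fin g) ℝ)
  {Z : Matrix (Fin g) (Fin g) ℂ}
include hM

theorem spDen_conjTranspose_mul_spNum_sub :
    (spDen M Z)ᴴ * spNum M Z - (spNum M Z)ᴴ * spDen M Z = Z - Zᴴ := by
  simpa [spNum, spDen, conjTranspose_add, conjTranspose_mul, cmat_conjTranspose]
    using spDen_mul_spNum_sub hM Zᴴ Z

theorem spNum_transpose_mul_spDen (hZ : Z.IsSymm) :
    (spNum M Z)ᵀ * spDen M Z = (spDen M Z)ᵀ * spNum M Z := by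
  have h := spDen_mul_spNum_sub hM Zᵀ Z
  rw [hZ.eq, sub_self, sub_eq_zero] at h
  simpa [spNum, spDen, transpose_add, transpose_mul, hZ.eq] using h.symm

theorem det_spDen_ne_zero (hZ : Z ∈ SiegelUHP g) : (spDen M Z).det ≠ 0 := by
  intro h
  obtain ⟨v, hv, hDv⟩ := exists_mulVec_eq_zero_iff.2 h
  have hpos := (mem_siegelUHP_iff.1 hZ).2.dotProduct_mulVec_pos hv
  rw [← spDen_conjTranspose_mul_spNum_sub hM, smul_mulVec, Matrix.sub_mulVec, ← mulVec_mulVec,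
    ← mulVec_mulVec, hDv, dotProduct_smul, dotProduct_sub, dotProduct_mulVec, ← star_mulVec,
    hDv] at hpos
  simp at hpos

theorem isUnit_det_spDen (hZ : Z ∈ SiegelUHP g) : IsUnit (spDen M Z).det :=
  isUnit_iff_ne_zero.2 (det_spDen_ne_zero hM hZ)

theorem spAct_isSymm (hZ : Z ∈ SiegelUHP g) : (spAct M Z).IsSymm := by
  have hD := isUnit_det_spDen hM hZ
  have hDT : IsUnit (spDen M Z)ᵀ.det := by rwa [det_transpose]
  rw [IsSymm, spAct_eq_spNum_mul_inv, transpose_mul, transpose_nonsing_inv]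
  calc ((spDen M Z)ᵀ)⁻¹ * (spNum M Z)ᵀ
      = ((spDen M Z)ᵀ)⁻¹ * ((spNum M Z)ᵀ * spDen M Z) * (spDen M Z)⁻¹ := by
        rw [← Matrix.mul_assoc, mul_nonsing_inv_cancel_right _ _ hD]
    _ = ((spDen M Z)ᵀ)⁻¹ * ((spDen M Z)ᵀ * spNum M Z) * (spDen M Z)⁻¹ := by
        rw [spNum_transpose_mul_spDen hM hZ.1]
    _ = spNum M Z * (spDen M Z)⁻¹ := by
        rw [nonsing_inv_mul_cancel_left _ _ hDT]

theorem spAct_sub_conjTranspose (hZ : Z ∈ SiegelUHP g) :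
    spAct M Z - (spAct M Z)ᴴ = ((spDen M Z)⁻¹)ᴴ * (Z - Zᴴ) * (spDen M Z)⁻¹ := by
  have hD := isUnit_det_spDen hM hZ
  have hDH : IsUnit (spDen M Z)ᴴ.det := by rw [det_conjTranspose]; exact hD.star
  rw [← spDen_conjTranspose_mul_spNum_sub hM (Z := Z), spAct_eq_spNum_mul_inv, conjTranspose_mul,
    conjTranspose_nonsing_inv, Matrix.mul_sub, Matrix.sub_mul, nonsing_inv_mul_cancel_left _ _ hDH,
    Matrix.mul_assoc, Matrix.mul_assoc, mul_nonsing_inv _ hD, Matrix.mul_one]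

theorem spAct_mem_siegelUHP (hZ : Z ∈ SiegelUHP g) : spAct M Z ∈ SiegelUHP g := by
  refine mem_siegelUHP_iff.2 ⟨spAct_isSymm hM hZ, ?_⟩
  have hU : IsUnit (spDen M Z)⁻¹ :=
    (isUnit_nonsing_inv_iff).2 ((isUnit_iff_isUnit_det _).2 (isUnit_det_spDen hM hZ))
  rw [spAct_sub_conjTranspose hM hZ, ← star_eq_conjTranspose, ← Matrix.smul_mul,
    ← Matrix.mul_smul, hU.posDef_star_left_conjugate_iff]
  exact (mem_siegelUHP_iff.1 hZ).2

end SiegelAction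

section Composition

variable {g : ℕ}

theorem cmat_mul (A B : Matrix (Fin g) (Fin g) ℝ) : cmat (A * B) = cmat A * cmat B :=
  Matrix.map_mul (f := ofRealHom)

theorem cmat_add (A B : Matrix (Fin g) (Fin g) ℝ) : cmat (A + B) = cmat A + cmat B :=
  Matrix.map_add _ (by simp) A B

theorem spNum_spDen_mul (M N : SpMat g) (Z : Matrix (Fin g) (Fin g) ℂ) :
    spNum (M * N) Z = cmat M.toBlocks₁₁ * spNum N Z + cmat M.toBlocks₁₂ * spDen N Z ∧
    spDen (M * N) Z = cmat M.toBlocks₂₁ * spNum N Z + cmat M.toBlocks₂₂ * spDen N Z := by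
  have hMN : M * N = fromBlocks
      (M.toBlocks₁₁ * N.toBlocks₁₁ + M.toBlocks₁₂ * N.toBlocks₂₁)
      (M.toBlocks₁₁ * N.toBlocks₁₂ + M.toBlocks₁₂ * N.toBlocks₂₂)
      (M.toBlocks₂₁ * N.toBlocks₁₁ + M.toBlocks₂₂ * N.toBlocks₂₁)
      (M.toBlocks₂₁ * N.toBlocks₁₂ + M.toBlocks₂₂ * N.toBlocks₂₂) := by
    conv_lhs => rw [← fromBlocks_toBlocks M, ← fromBlocks_toBlocks N, fromBlocks_multiply]
  simp only [spNum, spDen, hMN, toBlocks_fromBlocks₁₁, toBlocks_fromBlocks₁₂,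
    toBlocks_fromBlocks₂₁, toBlocks_fromBlocks₂₂, cmat_add, cmat_mul]
  constructor <;> noncomm_ring

theorem spNum_spDen_mul_of_isUnit {M N : SpMat g} {Z : Matrix (Fin g) (Fin g) ℂ}
    (hN : IsUnit (spDen N Z).det) :
    spNum (M * N) Z = spNum M (spAct N Z) * spDen N Z ∧
    spDen (M * N) Z = spDen M (spAct N Z) * spDen N Z := by
  have hcancel : spAct N Z * spDen N Z = spNum N Z := nonsing_inv_mul_cancel_right _ _ hN
  obtain ⟨hNum, hDen⟩ := spNum_spDen_mul M N Z
  constructor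
  · rw [hNum, show spNum M (spAct N Z) = cmat M.toBlocks₁₁ * spAct N Z + cmat M.toBlocks₁₂ from rfl,
      Matrix.add_mul, Matrix.mul_assoc, hcancel]
  · rw [hDen, show spDen M (spAct N Z) = cmat M.toBlocks₂₁ * spAct N Z + cmat M.toBlocks₂₂ from rfl,
      Matrix.add_mul, Matrix.mul_assoc, hcancel]

theorem Jfac_mul {M N : SpMat g} {Z : Matrix (Fin g) (Fin g) ℂ} (hN : IsUnit (spDen N Z).det) :
    Jfac (M * N) Z = Jfac M (spAct N Z) * Jfac N Z := by
  rw [Jfac_eq_det_spDen, (spNum_spDen_mul_of_isUnit hN).2, det_mul]; rfl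

theorem spAct_mul {M N : SpMat g} {Z : Matrix (Fin g) (Fin g) ℂ} (hN : IsUnit (spDen N Z).det) :
    spAct (M * N) Z = spAct M (spAct N Z) := by
  obtain ⟨hNum, hDen⟩ := spNum_spDen_mul_of_isUnit (M := M) hN
  rw [spAct_eq_spNum_mul_inv, hNum, hDen, Matrix.mul_inv_rev, Matrix.mul_assoc,
    mul_nonsing_inv_cancel_left _ _ hN]
  rfl

end Composition

section Topology

variable {g : ℕ}

theorem iE_mem_siegelUHP : iE g ∈ SiegelUHP g := by
  have hIm : (Matrix.of fun i j => (iE g i j).im) = 1 := by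
    ext i j
    by_cases h : i = j <;> simp [iE, one_apply, h]
  exact ⟨by simp [iE, IsSymm], hIm ▸ PosDef.one⟩

theorem convex_siegelUHP : Convex ℝ (SiegelUHP g) := by
  intro Z₁ h₁ Z₂ h₂ a b ha hb hab
  refine ⟨by simp [IsSymm, h₁.1.eq, h₂.1.eq], ?_⟩
  have hIm : (Matrix.of fun i j => ((a • Z₁ + b • Z₂) i j).im) =
      a • (Matrix.of fun i j => (Z₁ i j).im) + b • (Matrix.of fun i j => (Z₂ i j).im) := by
    ext i j; simp
  rw [hIm]
  rcases ha.eq_or_lt with rfl | ha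
  · simpa [show b = 1 by linarith] using h₂.2
  · exact (h₁.2.smul ha).add_posSemidef (h₂.2.posSemidef.smul hb)

theorem continuousOn_spAct {M : SpMat g} (hM : M ∈ symplecticGroup (Fin g) ℝ) :
    ContinuousOn (spAct M) (SiegelUHP g) := by
  intro Z hZ
  have hD := isUnit_det_spDen hM hZ
  have hinv : ContinuousAt Inv.inv (spDen M Z) :=
    continuousAt_matrix_inv _ (hD.unit_spec ▸ NormedRing.inverse_continuousAt hD.unit)
  have hlin : ∀ A B : Matrix (Fin g) (Fin g) ℂ, Continuous fun Z => A * Z + B := fun A B =>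
    (continuous_const.mul continuous_id).add continuous_const
  exact ((hlin _ _).continuousAt.mul (hinv.comp (hlin _ _).continuousAt)).continuousWithinAt

end Topology

theorem sub_sub_mem_zmultiples_of_polar_mul {z w : ℂ} (hz : z ≠ 0) (hw : w ≠ 0) {a b c : ℝ}
    (ha : (‖z * w‖ : ℂ) * Complex.exp (I * a) = z * w)
    (hb : (‖z‖ : ℂ) * Complex.exp (I * b) = z) (hc : (‖w‖ : ℂ) * Complex.exp (I * c) = w) :
    a - b - c ∈ AddSubgroup.zmultiples (2 * Real.pi) := by
  have hnorm : (‖z * w‖ : ℂ) ≠ 0 := by simp [hz, hw]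
  have hexp : Complex.exp (I * a) = Complex.exp (I * ↑(b + c)) := by
    refine mul_left_cancel₀ hnorm ?_
    calc (‖z * w‖ : ℂ) * Complex.exp (I * a) = z * w := ha
      _ = (‖z‖ * Complex.exp (I * b)) * (‖w‖ * Complex.exp (I * c)) := by rw [hb, hc]
      _ = ‖z * w‖ * Complex.exp (I * ↑(b + c)) := by
        rw [norm_mul, ofReal_mul, ofReal_add, mul_add, Complex.exp_add]; ring
  obtain ⟨n, hn⟩ := Complex.exp_eq_exp_iff_exists_int.1 hexp
  refine AddSubgroup.mem_zmultiples_iff.2 ⟨n, ?_⟩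
  have : ((a - b - c : ℝ) : ℂ) = ((n • (2 * Real.pi) : ℝ) : ℂ) := by
    apply mul_left_cancel₀ I_ne_zero
    push_cast at hn ⊢
    linear_combination hn
  exact_mod_cast this.symm

section ArgBranch

variable {g : ℕ} {L : SpMat g → Matrix (Fin g) (Fin g) ℂ → ℝ} (hL : IsArgBranch g L)
  {M N : SpMat g} (hM : M ∈ symplecticGroup (Fin g) ℝ) (hN : N ∈ symplecticGroup (Fin g) ℝ)
include hL hM hN

theorem IsArgBranch.defect_mem_zmultiples {Z : Matrix (Fin g) (Fin g) ℂ} (hZ : Z ∈ SiegelUHP g) :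
    L (M * N) Z - L M (spAct N Z) - L N Z ∈ AddSubgroup.zmultiples (2 * Real.pi) := by
  have hNZ := spAct_mem_siegelUHP hN hZ
  have hMN := hL.2.1 _ (mul_mem hM hN) Z hZ
  rw [Jfac_mul (isUnit_det_spDen hN hZ)] at hMN
  exact sub_sub_mem_zmultiples_of_polar_mul (det_spDen_ne_zero hM hNZ) (det_spDen_ne_zero hN hZ)
    hMN (hL.2.1 M hM _ hNZ) (hL.2.1 N hN Z hZ)

theorem IsArgBranch.defect_eq_defect_iE {Z : Matrix (Fin g) (Fin g) ℂ} (hZ : Z ∈ SiegelUHP g) :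
    L (M * N) Z - L M (spAct N Z) - L N Z =
      L (M * N) (iE g) - L M (spAct N (iE g)) - L N (iE g) := by
  have hcont : ContinuousOn (fun Z => L (M * N) Z - L M (spAct N Z) - L N Z) (SiegelUHP g) :=
    ((hL.1 _ (mul_mem hM hN)).sub ((hL.1 M hM).comp (continuousOn_spAct hN)
      fun _ => spAct_mem_siegelUHP hN)).sub (hL.1 N hN)
  exact convex_siegelUHP.isPreconnected.constant_of_mapsTo
    (isDiscrete_iff_discreteTopology.2
      (inferInstanceAs (DiscreteTopology (AddSubgroup.zmultiples (2 * Real.pi))))) hcont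
    (fun _ => hL.defect_mem_zmultiples hM hN) hZ iE_mem_siegelUHP

end ArgBranch

def IsCocycleOn {G : Type*} [Mul G] (S : Set G) (w : G → G → ℝ) : Prop :=
  ∀ a ∈ S, ∀ b ∈ S, ∀ c ∈ S, w (a * b) c + w a b = w a (b * c) + w b c

theorem IsArgBranch.isCocycleOn_wcoc {g : ℕ} {L : SpMat g → Matrix (Fin g) (Fin g) ℂ → ℝ}
    (hL : IsArgBranch g L) : IsCocycleOn (symplecticGroup (Fin g) ℝ : Set (SpMat g)) (wcoc L) := by
  intro M₁ h₁ M₂ h₂ M₃ h₃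
  have hact : spAct (M₂ * M₃) (iE g) = spAct M₂ (spAct M₃ (iE g)) :=
    spAct_mul (isUnit_det_spDen h₃ iE_mem_siegelUHP)
  have hconst := hL.defect_eq_defect_iE h₁ h₂ (spAct_mem_siegelUHP h₃ iE_mem_siegelUHP)
  simp only [wcoc, ← add_div, mul_assoc, hact]
  congr 1
  linear_combination -hconst

theorem IsCocycleOn.conj {G : Type*} [Monoid G] {S : Set G} {w : G → G → ℝ}
    (hw : IsCocycleOn S w) {K K' M N : G} (hK'K : K' * K = 1) (hK : K ∈ S) (hM : M ∈ S)
    (hN : N ∈ S) (hM' : K * M * K' ∈ S) (hN' : K * N * K' ∈ S) :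
    w (K * M * K') (K * N * K') + w (K * (M * N) * K') K - w K (M * N) =
      (w (K * M * K') K - w K M) + (w (K * N * K') K - w K N) + w M N := by
  have h₁ := hw _ hM' _ hN' _ hK
  have h₂ := hw _ hM' _ hK _ hN
  have h₃ := hw _ hK _ hM _ hN
  simp only [mul_assoc, ← mul_assoc K' K, hK'K, one_mul, mul_one] at h₁ h₂ h₃ ⊢
  linarith

theorem conjugate_multiplier_general (g : ℕ)
    (L : SpMat g → Matrix (Fin g) (Fin g) ℂ → ℝ) (hL : IsArgBranch g L)
    (Γ : Set (SpMat g)) (hΓ : Γ ⊆ Matrix.symplecticGroup (Fin g) ℝ)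
    (r : ℝ) (v : SpMat g → ℂ) (hv : IsMultiplier g L Γ r v)
    (K : SpMat g) (hK : K ∈ Matrix.symplecticGroup (Fin g) ℝ)
    (hnorm : ∀ M ∈ Γ, K * M * K⁻¹ ∈ Γ) :
    IsMultiplier g L Γ r (fun M =>
      v (K * M * K⁻¹) *
        Complex.exp (2 * Real.pi * Complex.I * r * wcoc L (K * M * K⁻¹) K) /
        Complex.exp (2 * Real.pi * Complex.I * r * wcoc L K M)) := by
  have hK'K : K⁻¹ * K = 1 := nonsing_inv_mul K (SymplecticGroup.symplectic_det hK)
  have hconj : ∀ M N : SpMat g, K * M * K⁻¹ * (K * N * K⁻¹) = K * (M * N) * K⁻¹ := fun M N => by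
    simp only [Matrix.mul_assoc, ← Matrix.mul_assoc K⁻¹ K, hK'K, Matrix.one_mul]
  refine ⟨fun M hM => ?_, fun M hM N hN => ?_⟩
  · simp [hv.1 _ (hnorm M hM), Complex.norm_exp]
  have hw := hL.isCocycleOn_wcoc.conj hK'K hK (hΓ hM) (hΓ hN) (hΓ (hnorm M hM)) (hΓ (hnorm N hN))
  have hexp := congrArg (fun t : ℝ => Complex.exp (2 * Real.pi * I * r * t)) hw
  simp only [ofReal_add, ofReal_sub, mul_add, mul_sub, Complex.exp_add, Complex.exp_sub] at hexp
  simp only [← hconj, hv.2 _ (hnorm M hM) _ (hnorm N hN)]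
  rw [hconj]
  linear_combination (v (K * M * K⁻¹) * v (K * N * K⁻¹)) * hexp

/-- If `v` is a multiplier system of weight `r` on `Γ ⊂ Sp(g,ℤ)` and
`K ∈ Sp(g,ℤ)` normalizes `Γ`, then `ṽ(M) = v(KMK⁻¹)·σ(KMK⁻¹,K)/σ(K,M)` is again
a multiplier system of weight `r` on `Γ`. -/
theorem conjugate_multiplier (g : ℕ)
    (L : SpMat g → Matrix (Fin g) (Fin g) ℂ → ℝ) (hL : IsArgBranch g L)
    (Γ : Set (SpMat g)) (hΓ : Γ ⊆ Matrix.symplecticGroup (Fin g) ℝ)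
    (r : ℝ) (v : SpMat g → ℂ) (hv : IsMultiplier g L Γ r v)
    (K : SpMat g) (hK : K ∈ Matrix.symplecticGroup (Fin g) ℝ)
    (hKint : ∀ i j, ∃ n : ℤ, K i j = n)
    (hnorm : ∀ M ∈ Γ, K * M * K⁻¹ ∈ Γ) :
    IsMultiplier g L Γ r (fun M =>
      v (K * M * K⁻¹) *
        Complex.exp (2 * Real.pi * Complex.I * r * wcoc L (K * M * K⁻¹) K) /
        Complex.exp (2 * Real.pi * Complex.I * r * wcoc L K M)) :=
  conjugate_multiplier_general g L hL Γ hΓ r v hv K hK hnorm
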